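/- The union A ∪ B of A = {(x, sin(1/x)) : 0 < x ≤ 1} ∪ {(0, y) : −1 ≤ y ≤ 1} and B = {(x, 0) : −1 ≤ x ≤ 0} in ℝ² is connected but not approximately path-connected, even though A and B are each approximately path-connected and A ∩ B ≠ ∅. -/

import Mathlib

/-- A topological space `X` is approximately path-connected if for every finite
collection of nonempty open sets `V k` there is a continuous path `γ : [0,1] → X`
meeting each `V k` at some interior time `t ∈ (0,1)`. -/
def ApproxPathConnected (X : Type*) [TopologicalSpace X] : Prop :=
  ∀ (s : ℕ) (V : Fin s → Set X), (∀ k, IsOpen (V k)) → (∀ k, (V k).Nonempty) →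
    ∃ γ : C(unitInterval, X), ∀ k, ∃ t : unitInterval,
      (t : ℝ) ∈ Set.Ioo (0 : ℝ) 1 ∧ γ t ∈ V k

/-- The closed topologist's sine curve. -/
def sineCurve : Set (ℝ × ℝ) :=
  {p | ∃ x : ℝ, 0 < x ∧ x ≤ 1 ∧ p = (x, Real.sin (1 / x))} ∪
    {p | p.1 = 0 ∧ p.2 ∈ Set.Icc (-1 : ℝ) 1}

/-- The segment `{(x, 0) : -1 ≤ x ≤ 0}`. -/
def segB : Set (ℝ × ℝ) := {p | p.2 = 0 ∧ p.1 ∈ Set.Icc (-1 : ℝ) 0}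

/-!
Each piece contains a dense continuous image of an open interval (the graph of `sin (1 / x)` over
`(0, 1)`, resp. the open segment). Approximate path-connectedness holds for open intervals, passes
to dense continuous images and implies connectedness, and the two pieces meet at the origin.

A path in the union, however, cannot leave the half-plane `x > 0` once it is there: the set of
times it spends in it is clopen, because a path reaching the `y`-axis from the graph would have to
follow its oscillations between `1` and `-1`. So no path meets both `{x > 0}` and `{x < 0}`.
-/

open Set Real Filter Topology

theorem ApproxPathConnected.exists_path_meets {X : Type*} [TopologicalSpace X]
    (h : ApproxPathConnected X) {U V : Set X} (hU : IsOpen U) (hV : IsOpen V)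
    (hU₀ : U.Nonempty) (hV₀ : V.Nonempty) :
    ∃ γ : C(unitInterval, X), (∃ t, γ t ∈ U) ∧ ∃ t, γ t ∈ V := by
  obtain ⟨γ, hγ⟩ :=
    h 2 ![U, V] (Fin.forall_fin_two.2 ⟨hU, hV⟩) (Fin.forall_fin_two.2 ⟨hU₀, hV₀⟩)
  obtain ⟨⟨t, -, ht⟩, ⟨t', -, ht'⟩⟩ := Fin.forall_fin_two.1 hγ
  exact ⟨γ, ⟨t, ht⟩, t', ht'⟩

theorem ApproxPathConnected.preconnectedSpace {X : Type*} [TopologicalSpace X]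
    (h : ApproxPathConnected X) : PreconnectedSpace X := by
  refine ⟨fun U V hU hV hcover hU₀ hV₀ => ?_⟩
  obtain ⟨x, -, hx⟩ := hU₀
  obtain ⟨y, -, hy⟩ := hV₀
  obtain ⟨γ, ⟨t, ht⟩, t', ht'⟩ := h.exists_path_meets hU hV ⟨x, hx⟩ ⟨y, hy⟩
  obtain ⟨-, ⟨s, rfl⟩, hs⟩ := isPreconnected_range γ.continuous U V hU hV
    (fun _ _ => hcover (mem_univ _)) ⟨γ t, mem_range_self t, ht⟩
    ⟨γ t', mem_range_self t', ht'⟩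
  exact ⟨γ s, mem_univ _, hs⟩

theorem ApproxPathConnected.isConnected {Y : Type*} [TopologicalSpace Y] {s : Set Y}
    (h : ApproxPathConnected s) (hs : s.Nonempty) : IsConnected s :=
  have := h.preconnectedSpace
  isConnected_iff_connectedSpace.2 { toNonempty := hs.to_subtype }

theorem ApproxPathConnected.of_denseRange {X Y : Type*} [TopologicalSpace X]
    [TopologicalSpace Y] (hX : ApproxPathConnected X) {f : X → Y} (hf : Continuous f)
    (hd : DenseRange f) : ApproxPathConnected Y := by
  intro s V hV hV₀
  obtain ⟨γ, hγ⟩ := hX s (fun k => f ⁻¹' V k) (fun k => (hV k).preimage hf)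
    (fun k => hd.exists_mem_open (hV k) (hV₀ k))
  exact ⟨(ContinuousMap.mk f hf).comp γ, hγ⟩

-- A segment from below all the chosen points to above them passes each at an interior time.
theorem approxPathConnected_Ioo {a b : ℝ} (hab : a < b) : ApproxPathConnected (Ioo a b) := by
  intro s V _ hV₀
  choose x hxV using hV₀
  obtain ⟨c, hc, hcx⟩ : ∃ c ∈ Ioo a b, ∀ k, c ∈ Ioo a (x k) :=
    (Eventually.and (Ioo_mem_nhdsGT hab)
      (eventually_all.2 fun k => Ioo_mem_nhdsGT (x k).2.1)).exists
  obtain ⟨d, hd, hxd⟩ : ∃ d ∈ Ioo a b, ∀ k, d ∈ Ioo (x k : ℝ) b :=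
    (Eventually.and (Ioo_mem_nhdsLT hab)
      (eventually_all.2 fun k => Ioo_mem_nhdsLT (x k).2.2)).exists
  have hmem : ∀ τ ∈ Icc (0 : ℝ) 1, c + τ * (d - c) ∈ Ioo a b := fun τ hτ =>
    (convex_Ioo a b).add_smul_sub_mem hc hd hτ
  refine ⟨⟨fun t => ⟨c + t * (d - c), hmem t t.2⟩, by fun_prop⟩, fun k => ?_⟩
  obtain ⟨τ, hτ, hτx⟩ := intermediate_value_Ioo zero_le_one
    (f := fun τ : ℝ => c + τ * (d - c)) (by fun_prop)
    (by simpa using ⟨(hcx k).2, (hxd k).1⟩)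
  exact ⟨⟨τ, Ioo_subset_Icc_self hτ⟩, hτ, by simpa [Subtype.ext_iff, hτx] using hxV k⟩

theorem approxPathConnected_of_subset_closure_image {Y : Type*} [TopologicalSpace Y]
    {s : Set Y} {f : ℝ → Y} {a b : ℝ} (hab : a < b) (hf : ContinuousOn f (Ioo a b))
    (hfs : MapsTo f (Ioo a b) s) (hs : s ⊆ closure (f '' Ioo a b)) : ApproxPathConnected s := by
  refine (approxPathConnected_Ioo hab).of_denseRange (hf.mapsToRestrict hfs) ?_
  rw [DenseRange, Subtype.dense_iff, MapsTo.range_restrict, Subtype.image_preimage_coe,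
    inter_eq_right.2 (image_subset_iff.2 hfs)]
  exact hs

theorem exists_mem_Ioo_sin_one_div_eq {y : ℝ} (hy : y ∈ Icc (-1) 1) {δ : ℝ} (hδ : 0 < δ) :
    ∃ x ∈ Ioo 0 δ, sin (1 / x) = y := by
  obtain ⟨n, hn⟩ := exists_nat_gt (1 / δ + π / 2)
  set c := arcsin y + n * (2 * π)
  have hc : 1 / δ < c := by
    have := neg_pi_div_two_le_arcsin y
    have := pi_gt_three
    have : (0 : ℝ) ≤ n := n.cast_nonneg
    nlinarith
  have hc₀ : 0 < c := lt_trans (by positivity) hc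
  refine ⟨1 / c, ⟨by positivity, (one_div_lt hc₀ hδ).2 hc⟩, ?_⟩
  rw [one_div_one_div, sin_add_nat_mul_two_pi, sin_arcsin hy.1 hy.2]

theorem continuousOn_sin_one_div_graph :
    ContinuousOn (fun x : ℝ => (x, sin (1 / x))) {0}ᶜ :=
  continuousOn_id.prodMk (continuous_sin.comp_continuousOn
    (continuousOn_const.div continuousOn_id fun _ hx => hx))

theorem sineCurve_subset_closure :
    sineCurve ⊆ closure ((fun x : ℝ => (x, sin (1 / x))) '' Ioo 0 1) := by
  rintro p (⟨x, hx₀, hx₁, rfl⟩ | ⟨hp₁, hp₂⟩)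
  · have hx : x ∈ closure (Ioo 0 1) := by rw [closure_Ioo zero_ne_one]; exact ⟨hx₀.le, hx₁⟩
    exact (continuousOn_sin_one_div_graph.continuousAt
      (isOpen_compl_singleton.mem_nhds hx₀.ne')).continuousWithinAt.mem_closure_image hx
  · refine Metric.mem_closure_iff.2 fun ε hε => ?_
    obtain ⟨x, hx, hsin⟩ := exists_mem_Ioo_sin_one_div_eq hp₂ (lt_min hε one_pos)
    refine ⟨(x, sin (1 / x)), ⟨x, ⟨hx.1, hx.2.trans_le (min_le_right _ _)⟩, rfl⟩, ?_⟩
    rw [Prod.dist_eq, hp₁, hsin, dist_self, Real.dist_eq, zero_sub, abs_neg, abs_of_pos hx.1,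
      max_eq_left hx.1.le]
    exact hx.2.trans_le (min_le_left _ _)

theorem approxPathConnected_sineCurve : ApproxPathConnected sineCurve :=
  approxPathConnected_of_subset_closure_image zero_lt_one
    (continuousOn_sin_one_div_graph.mono fun _ hx => hx.1.ne')
    (fun x hx => Or.inl ⟨x, hx.1, hx.2.le, rfl⟩) sineCurve_subset_closure

theorem approxPathConnected_segB : ApproxPathConnected segB := by
  have hf : Continuous fun u : ℝ => (u, (0 : ℝ)) := by fun_prop
  refine approxPathConnected_of_subset_closure_image neg_one_lt_zero hf.continuousOn
    (fun u hu => ⟨rfl, Ioo_subset_Icc_self hu⟩) fun p ⟨hp₂, hp₁⟩ => ?_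
  rw [← closure_Ioo (neg_one_lt_zero.ne)] at hp₁
  exact image_closure_subset_closure_image hf ⟨p.1, hp₁, Prod.ext rfl hp₂.symm⟩

/-- Near a time at which `g` is on the `y`-axis, its first coordinate would sweep out an interval
`(0, ε)` on a connected neighbourhood, so its second coordinate would take both values `1` and `-1`
there. -/
theorem isClosed_setOf_fst_pos_of_sin_one_div {T : Type*} [TopologicalSpace T]
    [LocallyConnectedSpace T] {g : T → ℝ × ℝ} (hg : Continuous g)
    (hgraph : ∀ t, 0 < (g t).1 → (g t).2 = sin (1 / (g t).1)) :
    IsClosed {t | 0 < (g t).1} := by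
  have hg₁ : Continuous fun t => (g t).1 := continuous_fst.comp hg
  have hg₂ : Continuous fun t => (g t).2 := continuous_snd.comp hg
  refine isOpen_compl_iff.1 (isOpen_iff_mem_nhds.2 fun t (ht : ¬ 0 < (g t).1) => ?_)
  rcases (not_lt.1 ht).lt_or_eq with hneg | hzero
  · exact hg₁.continuousAt.eventually_lt continuousAt_const hneg |>.mono fun s hs => hs.not_gt
  set N := {s | dist (g s).2 (g t).2 < 1}
  have htN : t ∈ N := by simp [N]
  have hN : N ∈ 𝓝 t := (isOpen_lt (hg₂.dist continuous_const) continuous_const).mem_nhds htN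
  filter_upwards [connectedComponentIn_mem_nhds hN] with s hs hpos
  have hattains : ∀ y ∈ Icc (-1 : ℝ) 1, ∃ r ∈ N, (g r).2 = y := by
    intro y hy
    obtain ⟨x, hx, hsin⟩ := exists_mem_Ioo_sin_one_div_eq hy hpos
    obtain ⟨r, hr, hrx : (g r).1 = x⟩ := isPreconnected_connectedComponentIn.intermediate_value
      (mem_connectedComponentIn htN) hs hg₁.continuousOn (Ioo_subset_Icc_self (hzero ▸ hx))
    refine ⟨r, connectedComponentIn_subset _ _ hr, ?_⟩
    rw [hgraph r (hrx ▸ hx.1), hrx, hsin]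
  obtain ⟨r, hr, hr1⟩ := hattains 1 (by norm_num)
  obtain ⟨r', hr', hr1'⟩ := hattains (-1) (by norm_num)
  simp only [N, mem_ofPred_eq, Real.dist_eq, hr1, hr1', abs_lt] at hr hr'
  linarith [hr.2, hr'.1]

theorem snd_eq_sin_one_div_of_fst_pos {p : ℝ × ℝ} (hp : p ∈ sineCurve ∪ segB)
    (hp₁ : 0 < p.1) : p.2 = sin (1 / p.1) := by
  rcases hp with (⟨x, -, -, rfl⟩ | ⟨h, -⟩) | ⟨-, -, h⟩
  · rfl
  all_goals linarith

theorem not_approxPathConnected_sineCurve_union_segB :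
    ¬ ApproxPathConnected ↥(sineCurve ∪ segB) := by
  intro h
  have hfst : Continuous fun p : ↥(sineCurve ∪ segB) => (p : ℝ × ℝ).1 := by fun_prop
  obtain ⟨γ, ⟨t₀, ht₀⟩, t₁, ht₁ : (γ t₁ : ℝ × ℝ).1 < 0⟩ :=
    h.exists_path_meets (U := {p | 0 < (p : ℝ × ℝ).1}) (V := {p | (p : ℝ × ℝ).1 < 0})
      (isOpen_lt continuous_const hfst) (isOpen_lt hfst continuous_const)
      ⟨⟨(1, sin (1 / 1)), Or.inl (Or.inl ⟨1, one_pos, le_rfl, rfl⟩)⟩,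
        show (0 : ℝ) < 1 from one_pos⟩
      ⟨⟨(-1, 0), Or.inr ⟨rfl, by norm_num⟩⟩, show (-1 : ℝ) < 0 by norm_num⟩
  set g : ℝ → ℝ × ℝ := fun t =>
    (IccExtend (β := ↥(sineCurve ∪ segB)) zero_le_one γ t : ℝ × ℝ)
  have hg : Continuous g := by fun_prop
  have hclopen : IsClopen {t | 0 < (g t).1} :=
    ⟨isClosed_setOf_fst_pos_of_sin_one_div hg fun t =>
        snd_eq_sin_one_div_of_fst_pos (IccExtend zero_le_one γ t).2,
      isOpen_lt continuous_const (continuous_fst.comp hg)⟩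
  have hpos : (t₁ : ℝ) ∈ {t | 0 < (g t).1} :=
    hclopen.eq_univ ⟨t₀, by simpa [g] using ht₀⟩ ▸ mem_univ _
  simp only [g, IccExtend_val, mem_ofPred_eq] at hpos
  exact lt_asymm ht₁ hpos

theorem sineCurve_union_seg_connected_not_approxPathConnected :
    IsConnected (sineCurve ∪ segB) ∧
    ¬ ApproxPathConnected ↥(sineCurve ∪ segB) ∧
    ApproxPathConnected ↥sineCurve ∧
    ApproxPathConnected ↥segB ∧
    (sineCurve ∩ segB).Nonempty := by
  have hmeet : (sineCurve ∩ segB).Nonempty :=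
    ⟨(0, 0), Or.inr ⟨rfl, by norm_num⟩, rfl, by norm_num⟩
  refine ⟨?_, not_approxPathConnected_sineCurve_union_segB, approxPathConnected_sineCurve,
    approxPathConnected_segB, hmeet⟩
  exact IsConnected.union hmeet
    (approxPathConnected_sineCurve.isConnected (hmeet.mono inter_subset_left))
    (approxPathConnected_segB.isConnected (hmeet.mono inter_subset_right))
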